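/- arXiv:1809.00362 — 2 statements merged into one kernel-verified Lean document; each statement's English description precedes it below -/
import Mathlib

section
/- Given positive reals V_0,...,V_L (level variances), W_0,...,W_L (level costs), and a variance budget constraint Σ_ℓ V_ℓ/M_ℓ ≤ ε², the choice M_ℓ = (1/ε²) √(V_ℓ/W_ℓ) · (Σ_{k=0}^{L} √(V_k W_k)) minimizes the total cost Σ_ℓ M_ℓ W_ℓ over all positive real vectors (M_0,...,M_L) satisfying the constraint, and the minimal total cost equals (1/ε²)(Σ_ℓ √(V_ℓ W_ℓ))². -/
/-!
By Cauchy–Schwarz, `(∑ √(V ℓ W ℓ))² ≤ (∑ V ℓ / N ℓ) (∑ N ℓ W ℓ)` for every positive allocation `N`,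
so an allocation within the budget `ε²` costs at least `ε⁻² (∑ √(V ℓ W ℓ))²`. The allocation
`M ℓ ∝ √(V ℓ / W ℓ)` makes `V ℓ / M ℓ` and `M ℓ W ℓ` both proportional to `√(V ℓ W ℓ)`, which is the
equality case of Cauchy–Schwarz, and its normalisation spends the budget exactly.
-/

open Finset Real

theorem Real.sqrt_div_mul_self (x : ℝ) {y : ℝ} (hy : 0 ≤ y) : √(x / y) * y = √(x * y) := by
  rw [sqrt_div' x hy, div_mul_eq_mul_div, mul_div_assoc, div_sqrt, ← sqrt_mul' x hy]

theorem Real.div_sqrt_div {x : ℝ} (hx : 0 ≤ x) (y : ℝ) : x / √(x / y) = √(x * y) := by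
  rw [sqrt_div hx, div_div_eq_mul_div, mul_div_right_comm, div_sqrt, sqrt_mul hx]

theorem Finset.sq_sum_sqrt_mul_le_sum_div_mul_sum_mul {ι : Type*} (s : Finset ι) {V W N : ι → ℝ}
    (hV : ∀ i ∈ s, 0 ≤ V i) (hW : ∀ i ∈ s, 0 ≤ W i) (hN : ∀ i ∈ s, 0 < N i) :
    (∑ i ∈ s, √(V i * W i)) ^ 2 ≤ (∑ i ∈ s, V i / N i) * ∑ i ∈ s, N i * W i := by
  refine sum_sq_le_sum_mul_sum_of_sq_le_mul s
    (fun i hi ↦ div_nonneg (hV i hi) (hN i hi).le)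
    (fun i hi ↦ mul_nonneg (hN i hi).le (hW i hi)) fun i hi ↦ le_of_eq ?_
  rw [sq_sqrt (mul_nonneg (hV i hi) (hW i hi))]
  field_simp [(hN i hi).ne']

/-- Optimal MLMC sample allocation: the choice
`M ℓ = ε⁻² √(V ℓ / W ℓ) ∑ₖ √(V k * W k)` satisfies the variance budget
`∑ V ℓ / M ℓ ≤ ε²`, minimizes the total cost `∑ M ℓ * W ℓ` among all positive
allocations satisfying the budget, and has total cost `ε⁻² (∑ √(V ℓ W ℓ))²`. -/
theorem mlmc_optimal_allocation
    (L : ℕ) (V W : Fin (L + 1) → ℝ) (hV : ∀ ℓ, 0 < V ℓ) (hW : ∀ ℓ, 0 < W ℓ)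
    (ε : ℝ) (hε : 0 < ε)
    (M : Fin (L + 1) → ℝ)
    (hMdef : ∀ ℓ, M ℓ = ε⁻¹ ^ 2 * Real.sqrt (V ℓ / W ℓ)
        * ∑ k : Fin (L + 1), Real.sqrt (V k * W k)) :
    (∑ ℓ : Fin (L + 1), V ℓ / M ℓ ≤ ε ^ 2) ∧
    (∀ N : Fin (L + 1) → ℝ, (∀ ℓ, 0 < N ℓ) →
        ∑ ℓ : Fin (L + 1), V ℓ / N ℓ ≤ ε ^ 2 →
        ∑ ℓ : Fin (L + 1), M ℓ * W ℓ ≤ ∑ ℓ : Fin (L + 1), N ℓ * W ℓ) ∧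
    (∑ ℓ : Fin (L + 1), M ℓ * W ℓ
        = ε⁻¹ ^ 2 * (∑ ℓ : Fin (L + 1), Real.sqrt (V ℓ * W ℓ)) ^ 2) := by
  set S := ∑ k : Fin (L + 1), √(V k * W k) with hS_def
  have hS : 0 < S := sum_pos (fun k _ ↦ sqrt_pos.2 (mul_pos (hV k) (hW k))) univ_nonempty
  have hMW (ℓ) : M ℓ * W ℓ = ε⁻¹ ^ 2 * S * √(V ℓ * W ℓ) := by
    rw [hMdef, ← sqrt_div_mul_self _ (hW ℓ).le]; ring
  have hVM (ℓ) : V ℓ / M ℓ = √(V ℓ * W ℓ) / (ε⁻¹ ^ 2 * S) := by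
    rw [hMdef, ← div_sqrt_div (hV ℓ).le]; ring
  have hcost : ∑ ℓ, M ℓ * W ℓ = ε⁻¹ ^ 2 * S ^ 2 := by
    rw [sum_congr rfl fun ℓ _ ↦ hMW ℓ, ← mul_sum, ← hS_def]
    ring
  have hbudget : ∑ ℓ, V ℓ / M ℓ = ε ^ 2 := by
    rw [sum_congr rfl fun ℓ _ ↦ hVM ℓ, ← sum_div, ← hS_def]
    field_simp
  refine ⟨hbudget.le, fun N hN hNbudget ↦ ?_, hcost⟩
  refine le_of_mul_le_mul_left ?_ (pow_pos hε 2)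
  calc ε ^ 2 * ∑ ℓ, M ℓ * W ℓ = S ^ 2 := by rw [hcost]; field_simp
    _ ≤ (∑ ℓ, V ℓ / N ℓ) * ∑ ℓ, N ℓ * W ℓ :=
      sq_sum_sqrt_mul_le_sum_div_mul_sum_mul univ (fun ℓ _ ↦ (hV ℓ).le) (fun ℓ _ ↦ (hW ℓ).le)
        fun ℓ _ ↦ hN ℓ
    _ ≤ ε ^ 2 * ∑ ℓ, N ℓ * W ℓ := by
      gcongr
      exact sum_nonneg fun ℓ _ ↦ (mul_pos (hN ℓ) (hW ℓ)).le
end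

section
/- In the case q_2 < dγ, with V_ℓ ≤ Q_S β^{−q_2 ℓ}, W_ℓ = c β^{dγℓ}, and L chosen so that β^{q_1 L} ≥ Q_W h_0^{q_1}/((1−θ)TOL) (i.e., L ≈ log(TOL^{−1})/(q_1 log β) up to constants), the MLMC cost satisfies W(TOL, L) ≤ K · TOL^{−2 − (dγ − q_2)/q_1} for a constant K independent of TOL. -/
open Finset Real

/-! With `e = dγ - q₂ > 0`, the level terms `√(V_ℓ W_ℓ) ≤ √(Q_S c) β^(eℓ/2)` grow geometrically,
so the sum over levels is dominated by its last term: `(∑ ℓ ≤ L, √(V_ℓ W_ℓ))² ≲ β^(e(L+1))`.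
The bias-matching choice of `L` gives `β^(q₁(L+1)) ≲ 1/TOL`, hence
`β^(e(L+1)) = (β^(q₁(L+1)))^(e/q₁) ≲ TOL^(-e/q₁)`, and the prefactor contributes `TOL^(-2)`. -/

lemma geom_sum_le_pow_div_sub_one {K : Type*} [Field K] [LinearOrder K] [IsStrictOrderedRing K]
    {r : K} (hr : 1 < r) (n : ℕ) : ∑ i ∈ range n, r ^ i ≤ r ^ n / (r - 1) := by
  rw [geom_sum_eq hr.ne']
  gcongr
  linarith

lemma sq_sum_le_of_le_mul_pow {f : ℕ → ℝ} {B r : ℝ} (hr : 1 < r) (hf0 : ∀ i, 0 ≤ f i)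
    (hf : ∀ i, f i ≤ B * r ^ i) (n : ℕ) :
    (∑ i ∈ range n, f i) ^ 2 ≤ B ^ 2 * (r ^ n) ^ 2 / (r - 1) ^ 2 := by
  have hB : 0 ≤ B := nonneg_of_mul_nonneg_left ((hf0 0).trans (hf 0)) (by simp)
  calc (∑ i ∈ range n, f i) ^ 2 ≤ (B * (r ^ n / (r - 1))) ^ 2 := by
        gcongr
        · exact sum_nonneg fun i _ => hf0 i
        · calc ∑ i ∈ range n, f i ≤ ∑ i ∈ range n, B * r ^ i := sum_le_sum fun i _ => hf i
            _ = B * ∑ i ∈ range n, r ^ i := (mul_sum _ _ _).symm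
            _ ≤ B * (r ^ n / (r - 1)) := by gcongr; exact geom_sum_le_pow_div_sub_one hr n
    _ = B ^ 2 * (r ^ n) ^ 2 / (r - 1) ^ 2 := by rw [mul_pow, div_pow, mul_div_assoc]

lemma sqrt_mul_le_sqrt_mul_rpow_pow {v w Q c β p q : ℝ} {ℓ : ℕ} (hβ : 0 < β) (hc : 0 ≤ c)
    (hv : v ≤ Q * β ^ (-(q * ℓ))) (hw : w = c * β ^ (p * ℓ)) :
    √(v * w) ≤ √(Q * c) * (β ^ ((p - q) / 2)) ^ ℓ := by
  have hvw : v * w ≤ Q * c * β ^ ((p - q) * ℓ) := by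
    calc v * w ≤ Q * β ^ (-(q * ℓ)) * (c * β ^ (p * ℓ)) := by
          rw [hw]; gcongr
      _ = Q * c * (β ^ (-(q * ℓ)) * β ^ (p * ℓ)) := by ring
      _ = Q * c * β ^ ((p - q) * ℓ) := by rw [← rpow_add hβ]; ring_nf
  calc √(v * w) ≤ √(Q * c * β ^ ((p - q) * ℓ)) := sqrt_le_sqrt hvw
    _ = √(Q * c) * (β ^ ((p - q) / 2)) ^ ℓ := by
      rw [sqrt_mul' _ (rpow_nonneg hβ.le _), sqrt_eq_rpow (β ^ _), ← rpow_mul hβ.le,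
        ← rpow_natCast, ← rpow_mul hβ.le]
      ring_nf

lemma pow_natCeil_logb_le {b z : ℝ} (hb : 1 < b) (hz : 0 < z) :
    b ^ ⌈logb b z⌉₊ ≤ b * max 1 z := by
  rcases le_or_gt (logb b z) 0 with hle | hpos
  · rw [Nat.ceil_eq_zero.mpr hle, pow_zero]
    exact one_le_mul_of_one_le_of_one_le hb.le (le_max_left 1 z)
  · calc b ^ ⌈logb b z⌉₊ = b ^ (⌈logb b z⌉₊ : ℝ) := (rpow_natCast b _).symm
      _ ≤ b ^ (logb b z + 1) :=
          rpow_le_rpow_of_exponent_le hb.le (Nat.ceil_lt_add_one hpos.le).le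
      _ = b * z := by rw [rpow_add_one (by linarith), rpow_logb (by linarith) hb.ne' hz, mul_comm]
      _ ≤ b * max 1 z := by gcongr; exact le_max_right 1 z

lemma max_one_div_le_max_one_div {A T : ℝ} (hT : 0 < T) (hT1 : T ≤ 1) :
    max 1 (A / T) ≤ max 1 A / T := by
  refine max_le ?_ ?_
  · rw [le_div_iff₀ hT, one_mul]; exact hT1.trans (le_max_left 1 A)
  · gcongr; exact le_max_right 1 A

lemma rpow_pow_natCeil_succ_le {β q₁ A T : ℝ} (hβ : 1 < β) (hq₁ : 0 < q₁) (hA : 0 < A)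
    (hT : 0 < T) (hT1 : T ≤ 1) :
    (β ^ q₁) ^ (⌈log (A / T) / (q₁ * log β)⌉₊ + 1) ≤ (β ^ q₁) ^ 2 * max 1 A / T := by
  have hb : 1 < β ^ q₁ := one_lt_rpow hβ hq₁
  have hlogb : log (A / T) / (q₁ * log β) = logb (β ^ q₁) (A / T) := by
    rw [logb, log_rpow (by linarith)]
  rw [hlogb, pow_succ]
  calc (β ^ q₁) ^ ⌈logb (β ^ q₁) (A / T)⌉₊ * β ^ q₁ ≤ β ^ q₁ * max 1 (A / T) * β ^ q₁ := by
        gcongr; exact pow_natCeil_logb_le hb (div_pos hA hT)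
    _ ≤ β ^ q₁ * (max 1 A / T) * β ^ q₁ := by
        gcongr; exact max_one_div_le_max_one_div hT hT1
    _ = (β ^ q₁) ^ 2 * max 1 A / T := by ring

lemma sq_pow_rpow_half_eq {β e q : ℝ} (hβ : 0 < β) (hq : q ≠ 0) (n : ℕ) :
    ((β ^ (e / 2)) ^ n) ^ 2 = ((β ^ q) ^ n) ^ (e / q) := by
  simp only [← rpow_natCast, ← rpow_mul hβ.le]
  congr 1
  field_simp
  ring

theorem mlmc_cost_worst_case_general
    (Q_S Q_W c C_ν h₀ θ β d γ q₁ q₂ : ℝ)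
    (hQS : 0 < Q_S) (hQW : 0 < Q_W) (hc : 0 < c) (hCν : 0 < C_ν) (hh₀ : 0 < h₀)
    (hθ : θ ∈ Set.Ioo (0 : ℝ) 1) (hβ : 1 < β)
    (hq₁ : 0 < q₁) (hq₂dγ : q₂ < d * γ)
    (V W : ℕ → ℝ)
    (hV : ∀ ℓ, 0 ≤ V ℓ ∧ V ℓ ≤ Q_S * β ^ (-(q₂ * ℓ)))
    (hW : ∀ ℓ, W ℓ = c * β ^ (d * γ * ℓ)) :
    ∃ K : ℝ, 0 < K ∧ ∀ TOL : ℝ, 0 < TOL → TOL ≤ 1 →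
      ∀ L : ℕ,
        L = ⌈Real.log (Q_W * h₀ ^ q₁ / ((1 - θ) * TOL)) / (q₁ * Real.log β)⌉₊ →
        (C_ν / (θ * TOL)) ^ 2
            * (∑ ℓ ∈ Finset.range (L + 1), Real.sqrt (V ℓ * W ℓ)) ^ 2
          ≤ K * TOL ^ (-(2 + (d * γ - q₂) / q₁)) := by
  obtain ⟨hθ0, hθ1⟩ := hθ
  have hβ0 : 0 < β := by linarith
  set a := (d * γ - q₂) / q₁
  set r := β ^ ((d * γ - q₂) / 2)
  have hr : 1 < r := one_lt_rpow hβ (by linarith)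
  set A := Q_W * h₀ ^ q₁ / (1 - θ)
  have hA : 0 < A := div_pos (by positivity) (by linarith)
  set P := (β ^ q₁) ^ 2 * max 1 A
  have hP : 0 < P := by positivity
  refine ⟨(C_ν / θ) ^ 2 * (Q_S * c) * P ^ a / (r - 1) ^ 2, by positivity, ?_⟩
  rintro T hT hT1 L rfl
  rw [← div_div (Q_W * h₀ ^ q₁)]
  set L := ⌈log (A / T) / (q₁ * log β)⌉₊
  have hsum := sq_sum_le_of_le_mul_pow hr (fun ℓ => sqrt_nonneg _)
    (fun ℓ => sqrt_mul_le_sqrt_mul_rpow_pow hβ0 hc.le (hV ℓ).2 (hW ℓ)) (L + 1)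
  have hlevel : (r ^ (L + 1)) ^ 2 ≤ P ^ a * T ^ (-a) := by
    rw [sq_pow_rpow_half_eq hβ0 hq₁.ne', rpow_neg hT.le, ← div_eq_mul_inv, ← div_rpow hP.le hT.le]
    exact rpow_le_rpow (by positivity) (rpow_pow_natCeil_succ_le hβ hq₁ hA hT hT1)
      (div_pos (by linarith) hq₁).le
  rw [sq_sqrt (by positivity)] at hsum
  calc (C_ν / (θ * T)) ^ 2 * (∑ ℓ ∈ range (L + 1), √(V ℓ * W ℓ)) ^ 2
      ≤ (C_ν / (θ * T)) ^ 2 * (Q_S * c * (P ^ a * T ^ (-a)) / (r - 1) ^ 2) := by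
        gcongr; exact hsum.trans (by gcongr)
    _ = (C_ν / θ) ^ 2 * (Q_S * c) * P ^ a / (r - 1) ^ 2 * T ^ (-(2 + a)) := by
        rw [neg_add, rpow_add hT, rpow_neg hT.le 2, rpow_two]
        field_simp

/-- Worst-case MLMC complexity (`q₂ < dγ`): with the bias-matching deepest
level `L = ⌈log(Q_W h₀^{q₁}/((1−θ)TOL)) / (q₁ log β)⌉`, the optimally
allocated cost satisfies `W(TOL, L) ≤ K · TOL^{−2 − (dγ − q₂)/q₁}` for a
constant `K` independent of `TOL`. -/
theorem mlmc_cost_worst_case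
    (Q_S Q_W c C_ν h₀ θ β d γ q₁ q₂ : ℝ)
    (hQS : 0 < Q_S) (hQW : 0 < Q_W) (hc : 0 < c) (hCν : 0 < C_ν) (hh₀ : 0 < h₀)
    (hθ : θ ∈ Set.Ioo (0 : ℝ) 1) (hβ : 1 < β) (hd : 1 ≤ d) (hγ : 0 < γ)
    (hq₁ : 0 < q₁) (hq₂ : 0 < q₂) (hq₂dγ : q₂ < d * γ) (hq₁q₂ : q₂ / 2 ≤ q₁)
    (V W : ℕ → ℝ)
    (hV : ∀ ℓ, 0 ≤ V ℓ ∧ V ℓ ≤ Q_S * β ^ (-(q₂ * ℓ)))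
    (hW : ∀ ℓ, W ℓ = c * β ^ (d * γ * ℓ)) :
    ∃ K : ℝ, 0 < K ∧ ∀ TOL : ℝ, 0 < TOL → TOL ≤ 1 →
      ∀ L : ℕ,
        L = ⌈Real.log (Q_W * h₀ ^ q₁ / ((1 - θ) * TOL)) / (q₁ * Real.log β)⌉₊ →
        (C_ν / (θ * TOL)) ^ 2
            * (∑ ℓ ∈ Finset.range (L + 1), Real.sqrt (V ℓ * W ℓ)) ^ 2
          ≤ K * TOL ^ (-(2 + (d * γ - q₂) / q₁)) :=
  mlmc_cost_worst_case_general Q_S Q_W c C_ν h₀ θ β d γ q₁ q₂ hQS hQW hc hCν hh₀ hθ hβ hq₁ hq₂dγ V W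
    hV hW
end
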